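/- arXiv:1311.2805 — 4 statements merged into one kernel-verified Lean document; each statement's English description precedes it below -/
import Mathlib

section
/- Let Fin denote (a skeleton of) the category of finite sets and all set maps, equipped with the symmetric monoidal structure given by disjoint union. Equip the functor category Fun(Finᵒᵖ, Type) with the Day convolution monoidal structure induced by disjoint union on Fin. Then for any two types X and Y there is an isomorphism, natural in X and Y, between the Day convolution of the presheaves S ↦ (S → X) and S ↦ (S → Y), and the presheaf S ↦ (S → X ⊕ Y); i.e. Map(−, X) ⊗_{Day} Map(−, Y) ≅ Map(−, X ⊔ Y). -/
open CategoryTheory Opposite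

/-- A skeleton of the category of finite sets: objects are natural numbers `n`,
thought of as the finite sets `Fin n`, and morphisms are all functions. -/
structure FinCat : Type where
  n : ℕ

instance : Category FinCat where
  Hom m n := Fin m.n → Fin n.n
  id _ := id
  comp f g := g ∘ f

/-- The symmetric monoidal (disjoint union) structure on `FinCat`: the sum functor. -/
def sumFunctor : FinCat × FinCat ⥤ FinCat where
  obj p := ⟨p.1.n + p.2.n⟩
  map {p q} f := fun i => finSumFinEquiv (Sum.map f.1 f.2 (finSumFinEquiv.symm i))
  map_id p := by
    funext i
    simp [CategoryStruct.id]
  map_comp {p q r} f g := by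
    funext i
    simp [CategoryStruct.comp, Function.comp]

/-- The presheaf `Map(−, X)` on `FinCat` sending a finite set `S` to the set of
functions `S → X`. -/
def mapTo (X : Type) : FinCatᵒᵖ ⥤ Type where
  obj S := Fin S.unop.n → X
  map f := TypeCat.ofHom fun g => g ∘ f.unop

/-- Functoriality of `Map(−, X)` in `X`. -/
def mapToMap {X Y : Type} (u : X → Y) : mapTo X ⟶ mapTo Y where
  app S := TypeCat.ofHom fun g => u ∘ g

/-- The external product of two presheaves on `FinCat`. -/
def extProd (F G : FinCatᵒᵖ ⥤ Type) : (FinCat × FinCat)ᵒᵖ ⥤ Type where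
  obj p := F.obj (op p.unop.1) × G.obj (op p.unop.2)
  map f := TypeCat.ofHom fun x => (F.map (f.unop.1).op x.1, G.map (f.unop.2).op x.2)
  map_id p := by
    ext x
    · simp
    · change G.map (𝟙 (unop p).2).op x.2 = x.2
      simp
  map_comp f g := by
    ext x
    · simp
    · change G.map (g.unop.2 ≫ f.unop.2).op x.2 = G.map g.unop.2.op (G.map f.unop.2.op x.2)
      simp

/-- Functoriality of the external product. -/
def extProdMap {F F' G G' : FinCatᵒᵖ ⥤ Type} (α : F ⟶ F') (β : G ⟶ G') :
    extProd F G ⟶ extProd F' G' where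
  app p := TypeCat.ofHom fun x => (α.app _ x.1, β.app _ x.2)
  naturality p q f := by
    ext x
    exact Prod.ext (ConcreteCategory.congr_hom (α.naturality (f.unop.1).op) x.1 :)
      (ConcreteCategory.congr_hom (β.naturality (f.unop.2).op) x.2 :)

/-- The Day convolution of two presheaves on `FinCat` with respect to the disjoint
union monoidal structure: the left Kan extension along the sum functor of their
external product. -/
noncomputable def dayConv (F G : FinCatᵒᵖ ⥤ Type) : FinCatᵒᵖ ⥤ Type :=
  sumFunctor.op.lan.obj (extProd F G)

/-- Functoriality of the Day convolution. -/
noncomputable def dayConvMap {F F' G G' : FinCatᵒᵖ ⥤ Type} (α : F ⟶ F') (β : G ⟶ G') :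
    dayConv F G ⟶ dayConv F' G' :=
  sumFunctor.op.lan.map (extProdMap α β)

/-!
`(f, g) ↦ f ⊔ g` exhibits `Map(−, X ⊕ Y)` as a left Kan extension of
`(a, b) ↦ Map(a, X) × Map(b, Y)` along disjoint union. Given `γ : Map(a, X) × Map(b, Y) → H(a ⊔ b)`
natural in `(a, b)`, every `h : n → X ⊕ Y` factors as `(f ⊔ g) ∘ ψ` with `ψ : n → a ⊔ b`, and
`H(ψ)(γ(f, g))` does not depend on the factorization: the canonical one, with `a` and `b` the
fibres of `h` over `X` and `Y`, maps to any other by some `u ⊔ v`, and naturality of `γ` identifies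
the two values. This defines the unique extension of `γ` to `Map(−, X ⊕ Y)`. Naturality in `X` and
`Y` then follows from uniqueness of maps out of a left Kan extension.
-/

theorem Sum.exists_eq_map_of_isLeft_eq {α β γ δ : Type*} {τ : α ⊕ β → γ ⊕ δ}
    (hτ : ∀ x, (τ x).isLeft = x.isLeft) : ∃ f g, τ = Sum.map f g :=
  ⟨fun a => (τ (.inl a)).getLeft (by simp [hτ]),
    fun b => (τ (.inr b)).getRight (by rw [← Sum.not_isLeft]; simp [hτ]),
    funext fun x => by cases x <;> simp [Sum.inl_getLeft, Sum.inr_getRight]⟩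

theorem Sum.exists_eq_map_of_map_comp_eq {α β α' β' X Y : Type*} {f : α → X} {g : β → Y}
    {f' : α' → X} {g' : β' → Y} {τ : α ⊕ β → α' ⊕ β'} (hτ : Sum.map f' g' ∘ τ = Sum.map f g) :
    ∃ u v, τ = Sum.map u v ∧ f' ∘ u = f ∧ g' ∘ v = g := by
  obtain ⟨u, v, rfl⟩ : ∃ u v, τ = Sum.map u v := Sum.exists_eq_map_of_isLeft_eq fun x => by
    rw [← Sum.isLeft_map f' g', ← Sum.isLeft_map f g x, ← hτ, Function.comp_apply]
  rw [Sum.map_comp_map] at hτ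
  exact ⟨u, v, rfl, funext fun a => Sum.inl_injective (congrFun hτ (.inl a)),
    funext fun b => Sum.inr_injective (congrFun hτ (.inr b))⟩

def finSumMap {X Y : Type*} {a b : ℕ} (f : Fin a → X) (g : Fin b → Y) : Fin (a + b) → X ⊕ Y :=
  Sum.map f g ∘ finSumFinEquiv.symm

section Split

variable {X Y : Type*} {n : ℕ} (h : Fin n → X ⊕ Y)

def leftCard : ℕ := Fintype.card {i // (h i).isLeft}

def rightCard : ℕ := Fintype.card {i // ¬(h i).isLeft}

noncomputable def splitEquiv : Fin n ≃ Fin (leftCard h) ⊕ Fin (rightCard h) :=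
  (Equiv.sumCompl _).symm.trans (Equiv.sumCongr (Fintype.equivFin _) (Fintype.equivFin _))

noncomputable def splitLeft (j : Fin (leftCard h)) : X :=
  let i := (Fintype.equivFin _).symm j
  (h i).getLeft i.2

noncomputable def splitRight (j : Fin (rightCard h)) : Y :=
  let i := (Fintype.equivFin _).symm j
  (h i).getRight (Sum.not_isLeft.1 i.2)

noncomputable def splitHom : (⟨n⟩ : FinCat) ⟶ sumFunctor.obj (⟨leftCard h⟩, ⟨rightCard h⟩) :=
  finSumFinEquiv ∘ splitEquiv h

theorem comp_splitEquiv_symm :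
    h ∘ (splitEquiv h).symm = Sum.map (splitLeft h) (splitRight h) := by
  funext x
  cases x
  · exact (Sum.inl_getLeft _ _).symm
  · exact (Sum.inr_getRight _ _).symm

theorem finSumMap_comp_splitHom : finSumMap (splitLeft h) (splitRight h) ∘ splitHom h = h := by
  change Sum.map _ _ ∘ (finSumFinEquiv.symm ∘ finSumFinEquiv) ∘ splitEquiv h = h
  rw [Equiv.symm_comp_self, Function.id_comp, ← comp_splitEquiv_symm, Function.comp_assoc,
    Equiv.symm_comp_self, Function.comp_id]

theorem exists_eq_map_comp_splitEquiv {a b : ℕ} {σ : Fin n → Fin a ⊕ Fin b} {f : Fin a → X}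
    {g : Fin b → Y} (hσ : Sum.map f g ∘ σ = h) :
    ∃ u v, σ = Sum.map u v ∘ splitEquiv h ∧ f ∘ u = splitLeft h ∧ g ∘ v = splitRight h := by
  obtain ⟨u, v, hτ, hu, hv⟩ := Sum.exists_eq_map_of_map_comp_eq (τ := σ ∘ (splitEquiv h).symm)
    (by rw [← Function.comp_assoc, hσ, comp_splitEquiv_symm])
  refine ⟨u, v, ?_, hu, hv⟩
  rw [← hτ, Function.comp_assoc, Equiv.symm_comp_self, Function.comp_id]

end Split

def mapToSumUnit (X Y : Type) :
    extProd (mapTo X) (mapTo Y) ⟶ sumFunctor.op ⋙ mapTo (X ⊕ Y) where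
  app _ := TypeCat.ofHom fun fg => finSumMap fg.1 fg.2
  naturality _ _ ρ := by
    ext fg
    funext i
    change Sum.map (fg.1 ∘ ρ.unop.1) (fg.2 ∘ ρ.unop.2) (finSumFinEquiv.symm i) =
      Sum.map fg.1 fg.2 (finSumFinEquiv.symm (finSumFinEquiv
        (Sum.map ρ.unop.1 ρ.unop.2 (finSumFinEquiv.symm i))))
    rw [Equiv.symm_apply_apply]
    exact (Sum.map_map _ _ _ _ _).symm

namespace mapToSumUnit

variable {X Y : Type} {H : FinCatᵒᵖ ⥤ Type}
  (γ : extProd (mapTo X) (mapTo Y) ⟶ sumFunctor.op ⋙ H)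

noncomputable def descValue {n : ℕ} (h : Fin n → X ⊕ Y) : H.obj (op ⟨n⟩) :=
  H.map (splitHom h).op (γ.app (op (⟨leftCard h⟩, ⟨rightCard h⟩)) (splitLeft h, splitRight h))

theorem map_app_eq_descValue {n a b : ℕ} {h : Fin n → X ⊕ Y}
    {ψ : (⟨n⟩ : FinCat) ⟶ sumFunctor.obj (⟨a⟩, ⟨b⟩)} {f : Fin a → X} {g : Fin b → Y}
    (hψ : finSumMap f g ∘ ψ = h) :
    H.map ψ.op (γ.app (op (⟨a⟩, ⟨b⟩)) (f, g)) = descValue γ h := by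
  obtain ⟨u, v, hσ, hu, hv⟩ := exists_eq_map_comp_splitEquiv h (σ := finSumFinEquiv.symm ∘ ψ) hψ
  let ρ : ((⟨leftCard h⟩, ⟨rightCard h⟩) : FinCat × FinCat) ⟶ (⟨a⟩, ⟨b⟩) := (u, v)
  have hψρ : ψ = splitHom h ≫ sumFunctor.map ρ := by
    funext i
    change ψ i = finSumFinEquiv (Sum.map u v (finSumFinEquiv.symm (finSumFinEquiv (splitEquiv h i))))
    rw [Equiv.symm_apply_apply]
    exact finSumFinEquiv.symm_apply_eq.1 (congrFun hσ i)
  have hγ : H.map (sumFunctor.map ρ).op (γ.app (op (⟨a⟩, ⟨b⟩)) (f, g)) =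
      γ.app (op (⟨leftCard h⟩, ⟨rightCard h⟩)) (f ∘ u, g ∘ v) :=
    (NatTrans.naturality_apply γ ρ.op _).symm
  rw [hψρ, op_comp, Functor.map_comp, types_comp_apply, hγ, hu, hv]
  rfl

noncomputable def desc : mapTo (X ⊕ Y) ⟶ H where
  app S := TypeCat.ofHom (descValue γ (n := S.unop.n))
  naturality S T u := by
    ext h
    change descValue γ (h ∘ u.unop) = H.map u (descValue γ h)
    rw [← map_app_eq_descValue γ (ψ := u.unop ≫ splitHom h)
      (congrArg (· ∘ u.unop) (finSumMap_comp_splitHom h)), op_comp, Functor.map_comp,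
      types_comp_apply]
    rfl

theorem fac : mapToSumUnit X Y ≫ Functor.whiskerLeft sumFunctor.op (desc γ) = γ := by
  ext ⟨⟨a⟩, ⟨b⟩⟩ ⟨f, g⟩
  change descValue γ (finSumMap f g) = γ.app (op (⟨a⟩, ⟨b⟩)) (f, g)
  rw [← map_app_eq_descValue γ (h := finSumMap f g) (ψ := 𝟙 (sumFunctor.obj (⟨a⟩, ⟨b⟩))) rfl]
  exact H.map_id_apply _ _

theorem uniq (δ : mapTo (X ⊕ Y) ⟶ H)
    (hδ : mapToSumUnit X Y ≫ Functor.whiskerLeft sumFunctor.op δ = γ) : δ = desc γ := by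
  ext ⟨⟨n⟩⟩ h
  change δ.app _ h = descValue γ h
  let x : (sumFunctor.op ⋙ mapTo (X ⊕ Y)).obj (op (⟨leftCard h⟩, ⟨rightCard h⟩)) :=
    (mapToSumUnit X Y).app _ (splitLeft h, splitRight h)
  calc δ.app _ h = δ.app _ ((mapTo (X ⊕ Y)).map (splitHom h).op x) :=
        congrArg (δ.app _) (finSumMap_comp_splitHom h).symm
    _ = H.map (splitHom h).op (δ.app _ x) := NatTrans.naturality_apply δ _ x
    _ = descValue γ h := by rw [← hδ]; rfl

end mapToSumUnit

instance (X Y : Type) : (mapTo (X ⊕ Y)).IsLeftKanExtension (mapToSumUnit X Y) :=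
  ⟨⟨Limits.IsInitial.ofUniqueHom
    (fun G => StructuredArrow.homMk (mapToSumUnit.desc G.hom) (mapToSumUnit.fac G.hom))
    (fun G m => StructuredArrow.hom_ext _ _
      (mapToSumUnit.uniq G.hom m.right (StructuredArrow.w m)))⟩⟩

theorem extProdMap_comp_mapToSumUnit {X X' Y Y' : Type} (u : X → X') (v : Y → Y') :
    extProdMap (mapToMap u) (mapToMap v) ≫ mapToSumUnit X' Y' =
      mapToSumUnit X Y ≫ Functor.whiskerLeft sumFunctor.op (mapToMap (Sum.map u v)) := by
  ext _ ⟨f, g⟩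
  funext i
  change Sum.map (u ∘ f) (v ∘ g) (finSumFinEquiv.symm i) =
    Sum.map u v (Sum.map f g (finSumFinEquiv.symm i))
  exact (Sum.map_map _ _ _ _ _).symm

noncomputable def dayConvMapToIso (X Y : Type) : dayConv (mapTo X) (mapTo Y) ≅ mapTo (X ⊕ Y) :=
  Functor.leftKanExtensionUnique _ (sumFunctor.op.lanUnit.app _) _ (mapToSumUnit X Y)

theorem lanUnit_comp_dayConvMapToIso_hom (X Y : Type) :
    sumFunctor.op.lanUnit.app (extProd (mapTo X) (mapTo Y)) ≫
      Functor.whiskerLeft sumFunctor.op (dayConvMapToIso X Y).hom = mapToSumUnit X Y := by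
  simp [dayConvMapToIso]

/-- Day convolution of representable-type presheaves: there is an isomorphism,
natural in `X` and `Y`, `Map(−, X) ⊛ Map(−, Y) ≅ Map(−, X ⊕ Y)`. -/
theorem dayConv_mapTo_iso :
    ∃ e : ∀ X Y : Type, dayConv (mapTo X) (mapTo Y) ≅ mapTo (X ⊕ Y),
      ∀ (X X' Y Y' : Type) (u : X → X') (v : Y → Y'),
        dayConvMap (mapToMap u) (mapToMap v) ≫ (e X' Y').hom =
          (e X Y).hom ≫ mapToMap (Sum.map u v) := by
  refine ⟨dayConvMapToIso, fun X X' Y Y' u v => ?_⟩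
  apply (sumFunctor.op.lan.obj _).hom_ext_of_isLeftKanExtension (sumFunctor.op.lanUnit.app _)
  have hunit := sumFunctor.op.lanUnit.naturality (extProdMap (mapToMap u) (mapToMap v))
  dsimp only [Functor.id_map, Functor.comp_map, Functor.whiskeringLeft_obj_map] at hunit
  unfold dayConvMap dayConv
  rw [Functor.whiskerLeft_comp, Functor.whiskerLeft_comp, ← Category.assoc, ← hunit,
    Category.assoc, lanUnit_comp_dayConvMapToIso_hom, extProdMap_comp_mapToSumUnit,
    ← Category.assoc, lanUnit_comp_dayConvMapToIso_hom]
end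

section
/- Let R be a commutative ring and let A be an étale commutative R-algebra. View A as a module over the enveloping algebra A ⊗_R A via the multiplication map μ : A ⊗_R A → A. Then the kernel of μ is generated by a single idempotent element of A ⊗_R A; consequently A is a direct summand of A ⊗_R A as an (A ⊗_R A)-module, and in particular A is a projective (A ⊗_R A)-module. -/
/-!
Étale algebras are unramified, so `Ω[A⁄R] = I / I²` vanishes for the diagonal ideal
`I = ker μ`; since `I` is finitely generated, `I = I²` forces `I = (e)` with `e` idempotent.
Then `a ↦ x * (1 - e)` for any `x` over `a` is a well-defined `A ⊗[R] A`-linear section of `μ`.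
-/

open TensorProduct

section KerEqSpanIdempotent

variable {S A : Type*} [CommRing S] [Ring A] [Algebra S A] {e : S}

theorem mul_one_sub_eq_of_algebraMap_eq (he : IsIdempotentElem e)
    (hker : RingHom.ker (algebraMap S A) = Ideal.span {e}) {x y : S}
    (hxy : algebraMap S A x = algebraMap S A y) : x * (1 - e) = y * (1 - e) := by
  obtain ⟨c, hc⟩ : e ∣ x - y := by
    rw [← Ideal.mem_span_singleton, ← hker, RingHom.sub_mem_ker_iff, hxy]
  rw [← sub_eq_zero, ← sub_mul, hc, mul_comm e, mul_assoc, he.mul_one_sub_self, mul_zero]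

variable (he : IsIdempotentElem e) (hker : RingHom.ker (algebraMap S A) = Ideal.span {e})
  (hsurj : Function.Surjective (algebraMap S A))

noncomputable def sectionOfKerEqSpanIdempotent : A →ₗ[S] S where
  toFun a := Function.surjInv hsurj a * (1 - e)
  map_add' a b := by
    rw [← add_mul]
    refine mul_one_sub_eq_of_algebraMap_eq he hker ?_
    simp only [map_add, Function.surjInv_eq]
  map_smul' x a := by
    rw [RingHom.id_apply, smul_eq_mul, ← mul_assoc]
    refine mul_one_sub_eq_of_algebraMap_eq he hker ?_
    simp only [map_mul, Function.surjInv_eq, Algebra.smul_def]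

theorem algebraMap_sectionOfKerEqSpanIdempotent (a : A) :
    algebraMap S A (sectionOfKerEqSpanIdempotent he hker hsurj a) = a := by
  have he_mem : e ∈ RingHom.ker (algebraMap S A) := hker ▸ Ideal.mem_span_singleton_self e
  simp [sectionOfKerEqSpanIdempotent, Function.surjInv_eq, (RingHom.mem_ker).mp he_mem]

theorem linearMap_comp_sectionOfKerEqSpanIdempotent :
    (Algebra.linearMap S A).comp (sectionOfKerEqSpanIdempotent he hker hsurj) = LinearMap.id :=
  LinearMap.ext (algebraMap_sectionOfKerEqSpanIdempotent he hker hsurj)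

end KerEqSpanIdempotent

theorem KaehlerDifferential.exists_isIdempotentElem_ideal_eq_span (R A : Type*) [CommRing R]
    [CommRing A] [Algebra R A] [Algebra.EssFiniteType R A] [Algebra.FormallyUnramified R A] :
    ∃ e : A ⊗[R] A, IsIdempotentElem e ∧ KaehlerDifferential.ideal R A = Ideal.span {e} :=
  (Ideal.isIdempotentElem_iff_of_fg _ (KaehlerDifferential.ideal_fg R A)).mp <|
    (Ideal.cotangent_subsingleton_iff _).mp <| inferInstanceAs <| Subsingleton Ω[A⁄R]

/-- For an étale commutative `R`-algebra `A`, viewing `A` as a module over `A ⊗[R] A` via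
the multiplication map `μ : A ⊗[R] A → A`, the kernel of `μ` is generated by a single
idempotent element; consequently `A` is a direct summand of `A ⊗[R] A` as an
`(A ⊗[R] A)`-module, and in particular `A` is a projective `(A ⊗[R] A)`-module. -/
theorem etale_mul_ker_idempotent_and_projective
    (R A : Type u) [CommRing R] [CommRing A] [Algebra R A] [Algebra.Etale R A] :
    letI : Algebra (A ⊗[R] A) A :=
      (Algebra.TensorProduct.lmul' R (S := A)).toRingHom.toAlgebra
    letI : Module (A ⊗[R] A) (A ⊗[R] A) := Semiring.toModule
    ∃ e : A ⊗[R] A, IsIdempotentElem e ∧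
      RingHom.ker (algebraMap (A ⊗[R] A) A) = Ideal.span {e} ∧
      (∃ s : A →ₗ[A ⊗[R] A] A ⊗[R] A,
        (Algebra.linearMap (A ⊗[R] A) A).comp s = LinearMap.id) ∧
      Module.Projective (A ⊗[R] A) A := by
  let : Algebra (A ⊗[R] A) A := (Algebra.TensorProduct.lmul' R (S := A)).toRingHom.toAlgebra
  obtain ⟨e, he, hker⟩ := KaehlerDifferential.exists_isIdempotentElem_ideal_eq_span R A
  have hsurj : Function.Surjective (algebraMap (A ⊗[R] A) A) := fun a =>
    ⟨a ⊗ₜ 1, by simp [RingHom.algebraMap_toAlgebra]⟩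
  have hsplit := linearMap_comp_sectionOfKerEqSpanIdempotent he hker hsurj
  exact ⟨e, he, hker, ⟨_, hsplit⟩, .of_split _ _ hsplit⟩
end

section
/- Let R be a commutative ring and let A be an étale commutative R-algebra. View A as a module over A ⊗_R A via the multiplication map μ(a ⊗ b) = ab. Then Tor_n^{A ⊗_R A}(A, A) = 0 for every n ≥ 1 (and Tor_0^{A ⊗_R A}(A, A) ≅ A); that is, the unit map from A to the Hochschild homology of A over R is a quasi-isomorphism. -/
/-!
`A ⊗[R] A` is unramified over `A` by base change, so the section of the multiplication map
`(A ⊗[R] A) ⊗[A] A → A` supplied by unramifiedness (Iversen I.2.3) makes the free `A`-module `A`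
a projective `A ⊗[R] A`-module. Hence the higher Tor groups vanish, and
`Tor₀ = A ⊗[A ⊗[R] A] A ≅ A` because the multiplication map `A ⊗[R] A → A` is surjective.
-/

namespace CategoryTheory

open MonoidalCategory

variable {C : Type*} [Category C] [MonoidalCategory C] [Abelian C] [MonoidalPreadditive C]
  [HasProjectiveResolutions C]

lemma isZero_Tor_of_projective (X Y : C) [Projective Y] {n : ℕ} (hn : 1 ≤ n) :
    Limits.IsZero (((Tor C n).obj X).obj Y) := by
  obtain ⟨m, rfl⟩ := Nat.exists_eq_add_of_le' hn
  exact isZero_Tor_succ_of_projective C X Y m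

noncomputable def torZeroIso (X Y : C) [Limits.PreservesFiniteColimits (tensorLeft X)] :
    ((Tor C 0).obj X).obj Y ≅ X ⊗ Y :=
  (tensorLeft X).leftDerivedZeroIsoSelf.app Y

end CategoryTheory

open TensorProduct CategoryTheory

lemma Algebra.FormallyUnramified.projective_tensorProduct_self
    (R A : Type*) [CommRing R] [CommRing A] [Algebra R A]
    [Algebra.FormallyUnramified R A] [Algebra.EssFiniteType R A] :
    letI : Algebra (A ⊗[R] A) A := (Algebra.TensorProduct.lmul' R (S := A)).toRingHom.toAlgebra
    Module.Projective (A ⊗[R] A) A := by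
  let : Algebra (A ⊗[R] A) A := (Algebra.TensorProduct.lmul' R (S := A)).toRingHom.toAlgebra
  have : IsScalarTower A (A ⊗[R] A) A := .of_algebraMap_eq fun a ↦ by
    simp [RingHom.algebraMap_toAlgebra]
  exact Algebra.FormallyUnramified.projective_of_restrictScalars (R := A) (S := A ⊗[R] A) A

/-- Weibel–Geller étale descent for Hochschild homology: for an étale commutative
`R`-algebra `A`, viewed as a module over `A ⊗[R] A` via the multiplication map,
`Tor_n^{A ⊗[R] A}(A, A) = 0` for all `n ≥ 1`, and `Tor_0^{A ⊗[R] A}(A, A) ≅ A`;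
i.e. the unit map from `A` to the Hochschild homology of `A` over `R` is a
quasi-isomorphism. -/
theorem etale_descent_hochschild_homology
    (R A : Type u) [CommRing R] [CommRing A] [Algebra R A] [Algebra.Etale R A] :
    letI : Algebra (A ⊗[R] A) A :=
      (Algebra.TensorProduct.lmul' R (S := A)).toRingHom.toAlgebra
    (∀ n : ℕ, 1 ≤ n →
      Limits.IsZero (((Tor (ModuleCat.{u} (A ⊗[R] A)) n).obj
        (ModuleCat.of (A ⊗[R] A) A)).obj (ModuleCat.of (A ⊗[R] A) A))) ∧
    Nonempty ((((Tor (ModuleCat.{u} (A ⊗[R] A)) 0).obj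
        (ModuleCat.of (A ⊗[R] A) A)).obj (ModuleCat.of (A ⊗[R] A) A)) ≅
      ModuleCat.of (A ⊗[R] A) A) := by
  let : Algebra (A ⊗[R] A) A := (Algebra.TensorProduct.lmul' R (S := A)).toRingHom.toAlgebra
  have : Projective (ModuleCat.of (A ⊗[R] A) A) :=
    (IsProjective.iff_projective A).mp
      (Algebra.FormallyUnramified.projective_tensorProduct_self R A)
  have mul_surjective : Function.Surjective (algebraMap (A ⊗[R] A) A) :=
    fun a ↦ ⟨a ⊗ₜ 1, by simp [RingHom.algebraMap_toAlgebra]⟩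
  let mulEquiv : A ⊗[A ⊗[R] A] A ≃ₗ[A ⊗[R] A] A :=
    .ofBijective _ (LinearMap.mul'_bijective_of_surjective _ A mul_surjective)
  exact ⟨fun _ hn ↦ isZero_Tor_of_projective _ _ hn,
    ⟨torZeroIso _ _ ≪≫ mulEquiv.toModuleIso⟩⟩
end

section
/- Let R be a commutative ring and let A be a commutative R-algebra which is the union of a directed (filtered) family of R-subalgebras (A_i)_{i ∈ I}, each of which is an étale R-algebra. View A as a module over A ⊗_R A via the multiplication map. Then Tor_n^{A ⊗_R A}(A, A) = 0 for every n ≥ 1; that is, the unit map from A to the Hochschild homology of A over R is a quasi-isomorphism. -/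
open TensorProduct CategoryTheory

universe u v

/-!
The kernel `I` of the multiplication map `A ⊗[R] A → A` is a pure ideal, i.e. `A ≅ (A ⊗[R] A) ⧸ I`
is flat over `A ⊗[R] A`, so its higher `Tor` vanish. Purity follows from the pointwise criterion
"every `x ∈ I` satisfies `x = x * y` for some `y ∈ I`" (Stacks 04PS): each `x ∈ I` comes from the
diagonal ideal of some `B i`, and that ideal is pure because it is finitely generated and, as
`Ω[B i⁄R] = 0`, idempotent.
-/

lemma Ideal.Pure.of_forall_exists_eq_mul {S : Type*} [CommRing S] {I : Ideal S}
    (h : ∀ x ∈ I, ∃ y ∈ I, x = x * y) : I.Pure :=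
  Ideal.Pure.of_inf_eq_mul I fun J _ ↦ le_antisymm
    (fun x ⟨hxI, hxJ⟩ ↦ by
      obtain ⟨y, hyI, hxy⟩ := h x hxI
      rw [hxy]
      exact Ideal.mul_mem_mul_rev hyI hxJ)
    Ideal.mul_le_inf

lemma Module.Flat.of_surjective_algebraMap_of_pure_ker {S T : Type*} [CommRing S] [CommRing T]
    [Algebra S T] (hsurj : Function.Surjective (algebraMap S T))
    [(RingHom.ker (algebraMap S T)).Pure] : Module.Flat S T :=
  have : (RingHom.ker (Algebra.ofId S T)).Pure := ‹(RingHom.ker (algebraMap S T)).Pure›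
  .of_linearEquiv
    (Ideal.quotientKerAlgEquivOfSurjective (f := Algebra.ofId S T) hsurj).toLinearEquiv.symm

lemma CategoryTheory.Functor.isZero_leftDerived_obj_succ_of_preservesHomology {C D : Type*}
    [Category C] [Abelian C] [HasProjectiveResolutions C] [Category D] [Abelian D]
    (F : C ⥤ D) [F.Additive] [F.PreservesHomology] (X : C) (n : ℕ) :
    Limits.IsZero ((F.leftDerived (n + 1)).obj X) := by
  let P := projectiveResolution X
  refine Limits.IsZero.of_iso ?_ (P.isoLeftDerivedObj F (n + 1))
  change Limits.IsZero (HomologicalComplex.homology _ _)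
  rw [← HomologicalComplex.exactAt_iff_isZero_homology,
    HomologicalComplex.exactAt_iff' _ (n + 2) (n + 1) n (by simp) (by simp)]
  exact ((HomologicalComplex.exactAt_iff' _ (n + 2) (n + 1) n (by simp) (by simp)).mp
    (P.complex_exactAt_succ n)).map F

lemma CategoryTheory.isZero_Tor_succ_of_flat {S : Type u} [CommRing S] (M N : ModuleCat.{u} S)
    [Module.Flat S M] (n : ℕ) : Limits.IsZero (((Tor (ModuleCat.{u} S) (n + 1)).obj M).obj N) :=
  (MonoidalCategory.tensorLeft M).isZero_leftDerived_obj_succ_of_preservesHomology N n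

namespace Algebra.TensorProduct

lemma lmul'_surjective (R A : Type*) [CommRing R] [CommRing A] [Algebra R A] :
    Function.Surjective (lmul' R (S := A)) :=
  fun a ↦ ⟨a ⊗ₜ 1, by rw [lmul'_apply_tmul, mul_one]⟩

lemma lmul'_map {R A B : Type*} [CommRing R] [CommRing A] [CommRing B]
    [Algebra R A] [Algebra R B] (f : B →ₐ[R] A) (z : B ⊗[R] B) :
    lmul' R (map f f z) = f (lmul' R z) :=
  AlgHom.congr_fun (show (lmul' R).comp (map f f) = f.comp (lmul' R) by ext <;> simp) z

end Algebra.TensorProduct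

instance KaehlerDifferential.ideal_pure (R S : Type*) [CommRing R] [CommRing S] [Algebra R S]
    [Algebra.FormallyUnramified R S] [Algebra.EssFiniteType R S] :
    (KaehlerDifferential.ideal R S).Pure :=
  .of_isIdempotentElem (KaehlerDifferential.ideal_fg R S) <|
    (Ideal.cotangent_subsingleton_iff _).mp <| inferInstanceAs <| Subsingleton Ω[S⁄R]

section DirectedUnion

open Algebra.TensorProduct

variable {R A : Type*} [CommRing R] [CommRing A] [Algebra R A]

lemma Subalgebra.range_tensorProduct_map_val_mono {B C : Subalgebra R A} (h : B ≤ C) :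
    (Algebra.TensorProduct.map B.val B.val).range ≤
      (Algebra.TensorProduct.map C.val C.val).range := by
  rw [← Subalgebra.val_comp_inclusion h, Algebra.TensorProduct.map_comp]
  exact AlgHom.range_comp_le_range _ _

variable {ι : Type*} [Nonempty ι] {B : ι → Subalgebra R A}

lemma Subalgebra.exists_mem_range_tensorProduct_map_val (hdir : Directed (· ≤ ·) B)
    (hunion : ⨆ i, B i = ⊤) (x : A ⊗[R] A) :
    ∃ i, x ∈ (Algebra.TensorProduct.map (B i).val (B i).val).range := by
  have hmem (a : A) : ∃ i, a ∈ B i := by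
    have ha : a ∈ (⊤ : Subalgebra R A) := Algebra.mem_top
    rw [← hunion, ← SetLike.mem_coe, Subalgebra.coe_iSup_of_directed hdir] at ha
    simpa using ha
  induction x using TensorProduct.induction_on with
  | zero => exact ⟨Classical.arbitrary ι, zero_mem _⟩
  | tmul a b =>
    obtain ⟨i, hi⟩ := hmem a
    obtain ⟨j, hj⟩ := hmem b
    obtain ⟨k, hik, hjk⟩ := hdir i j
    exact ⟨k, ⟨a, hik hi⟩ ⊗ₜ ⟨b, hjk hj⟩, rfl⟩
  | add x y hx hy =>
    obtain ⟨i, hi⟩ := hx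
    obtain ⟨j, hj⟩ := hy
    obtain ⟨k, hik, hjk⟩ := hdir i j
    exact ⟨k, add_mem (range_tensorProduct_map_val_mono hik hi)
      (range_tensorProduct_map_val_mono hjk hj)⟩

theorem KaehlerDifferential.ideal_pure_of_directed (hdir : Directed (· ≤ ·) B)
    (hunion : ⨆ i, B i = ⊤) [∀ i, Algebra.FormallyUnramified R (B i)]
    [∀ i, Algebra.EssFiniteType R (B i)] : (KaehlerDifferential.ideal R A).Pure := by
  refine .of_forall_exists_eq_mul fun x hx ↦ ?_
  obtain ⟨i, hi⟩ := Subalgebra.exists_mem_range_tensorProduct_map_val hdir hunion x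
  obtain ⟨x, rfl⟩ := AlgHom.mem_range _ |>.mp hi
  rw [RingHom.mem_ker, lmul'_map, map_eq_zero_iff _ Subtype.val_injective] at hx
  obtain ⟨y, hy, hxy⟩ := Ideal.exists_eq_mul_of_pure (I := KaehlerDifferential.ideal R (B i)) hx
  refine ⟨Algebra.TensorProduct.map (B i).val (B i).val y, ?_, by rw [← map_mul, ← hxy]⟩
  rw [RingHom.mem_ker, lmul'_map, RingHom.mem_ker.mp hy, map_zero]

end DirectedUnion

/-- If a commutative `R`-algebra `A` is the union of a directed family of étale
`R`-subalgebras, then, viewing `A` as a module over `A ⊗[R] A` via the multiplication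
map, `Tor_n^{A ⊗[R] A}(A, A) = 0` for all `n ≥ 1`; i.e. the unit map from `A` to the
Hochschild homology of `A` over `R` is a quasi-isomorphism. -/
theorem ind_etale_descent_hochschild_homology
    (R A : Type u) [CommRing R] [CommRing A] [Algebra R A]
    (ι : Type v) [Nonempty ι] (B : ι → Subalgebra R A)
    (hdir : Directed (· ≤ ·) B)
    (hunion : (⨆ i, B i) = ⊤)
    (hetale : ∀ i, Algebra.Etale R (B i)) :
    letI : Algebra (A ⊗[R] A) A :=
      (Algebra.TensorProduct.lmul' R (S := A)).toRingHom.toAlgebra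
    ∀ n : ℕ, 1 ≤ n →
      Limits.IsZero (((Tor (ModuleCat.{u} (A ⊗[R] A)) n).obj
        (ModuleCat.of (A ⊗[R] A) A)).obj (ModuleCat.of (A ⊗[R] A) A)) := by
  let _ : Algebra (A ⊗[R] A) A := (Algebra.TensorProduct.lmul' R (S := A)).toRingHom.toAlgebra
  intro n hn
  obtain ⟨m, rfl⟩ := Nat.exists_eq_add_of_le' hn
  have : (RingHom.ker (algebraMap (A ⊗[R] A) A)).Pure :=
    KaehlerDifferential.ideal_pure_of_directed hdir hunion
  have : Module.Flat (A ⊗[R] A) A :=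
    .of_surjective_algebraMap_of_pure_ker (Algebra.TensorProduct.lmul'_surjective R A)
  exact isZero_Tor_succ_of_flat _ _ m
end
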